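/- arXiv:math/0108099 — 7 statements merged into one kernel-verified Lean document; each statement's English description precedes it below -/
import Mathlib

section
/- Let d < 0 be square-free with d ≢ 1 mod 4, β = [[0,1],[d,0]], and define the involution on the Siegel upper half space 𝔥₂ by Ẑ = β·conj(Z)·(βᵀ)⁻¹. Then for Z ∈ 𝔥₂, Ẑ ∈ 𝔥₂ (i.e. Ẑ is symmetric with positive definite imaginary part), and the map Z ↦ Ẑ is an involution. -/
open Matrix

/-- The Siegel upper half space of genus 2. -/
def Siegel : Set (Matrix (Fin 2) (Fin 2) ℂ) :=
  {Z | Zᵀ = Z ∧ (Matrix.of fun i j => (Z i j).im).PosDef}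

/-- The anti-holomorphic involution `Ẑ = β ⬝ conj Z ⬝ (βᵀ)⁻¹`. -/
noncomputable def hatZ (β : Matrix (Fin 2) (Fin 2) ℝ) (Z : Matrix (Fin 2) (Fin 2) ℂ) :
    Matrix (Fin 2) (Fin 2) ℂ :=
  (β.map (Complex.ofReal)) * (Z.map (starRingEnd ℂ)) * ((β.map (Complex.ofReal))ᵀ)⁻¹

lemma hat_eq (d : ℝ) (hd : d ≠ 0) (Z : Matrix (Fin 2) (Fin 2) ℂ) :
    hatZ !![0, 1; d, 0] Z =
      !![(starRingEnd ℂ) (Z 1 1) / d, (starRingEnd ℂ) (Z 1 0);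
         (starRingEnd ℂ) (Z 0 1), d * (starRingEnd ℂ) (Z 0 0)] := by
  have hdC : (d : ℂ) ≠ 0 := by exact_mod_cast hd
  have hmap : (!![0, 1; d, 0] : Matrix (Fin 2) (Fin 2) ℝ).map Complex.ofReal
      = !![0, 1; (d:ℂ), 0] := by
    ext i j; fin_cases i <;> fin_cases j <;> simp
  have hT : (!![0, 1; (d:ℂ), 0])ᵀ = !![0, (d:ℂ); 1, 0] := by
    ext i j; fin_cases i <;> fin_cases j <;> simp
  have hinv : (!![0, (d:ℂ); 1, 0])⁻¹ = !![0, 1; (d:ℂ)⁻¹, 0] := by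
    apply inv_eq_right_inv
    rw [Matrix.mul_fin_two]
    simp [Matrix.one_fin_two, hdC]
  have hZmap : Z.map (starRingEnd ℂ)
      = !![(starRingEnd ℂ) (Z 0 0), (starRingEnd ℂ) (Z 0 1);
           (starRingEnd ℂ) (Z 1 0), (starRingEnd ℂ) (Z 1 1)] := by
    ext i j; fin_cases i <;> fin_cases j <;> simp
  rw [hatZ, hmap, hT, hinv, hZmap, Matrix.mul_fin_two, Matrix.mul_fin_two]
  ext i j; fin_cases i <;> fin_cases j <;>
    simp <;> field_simp <;> ring

lemma posdef_fin_two {p q r : ℝ} (hp : 0 < p) (hdet : 0 < p * r - q * q) :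
    (!![p, q; q, r] : Matrix (Fin 2) (Fin 2) ℝ).PosDef := by
  rw [Matrix.posDef_iff_dotProduct_mulVec]
  constructor
  · ext i j; fin_cases i <;> fin_cases j <;> simp [Matrix.conjTranspose_apply]
  · intro x hx
    have hx' : x 0 ≠ 0 ∨ x 1 ≠ 0 := by
      by_contra h
      push_neg at h
      apply hx
      ext i; fin_cases i <;> simp [h.1, h.2]
    have : star x ⬝ᵥ (!![p, q; q, r] *ᵥ x)
        = p * x 0 * x 0 + q * x 0 * x 1 + (q * x 0 * x 1 + r * x 1 * x 1) := by
      simp [dotProduct, Matrix.mulVec, Fin.sum_univ_two]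
      ring
    by_cases h1 : x 1 = 0
    · have h : x 0 ≠ 0 := hx'.resolve_right (by simp [h1])
      have h0 : 0 < x 0 * x 0 := mul_self_pos.mpr h
      rw [this, h1]
      nlinarith [mul_pos hp h0]
    · have h1' : 0 < x 1 * x 1 := mul_self_pos.mpr h1
      rw [this]
      nlinarith [sq_nonneg (p * x 0 + q * x 1), mul_pos hdet h1']

theorem hat_involution_on_Siegel' (d : ℤ) (hd : d < 0) (hsf : Squarefree d)
    (hmod : d % 4 ≠ 1) (Z : Matrix (Fin 2) (Fin 2) ℂ)
    (hZ : Zᵀ = Z ∧ (Matrix.of fun i j => (Z i j).im).PosDef) :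
    (hatZ !![0, 1; (d : ℝ), 0] Z)ᵀ = hatZ !![0, 1; (d : ℝ), 0] Z ∧
      (Matrix.of fun i j => ((hatZ !![0, 1; (d : ℝ), 0] Z) i j).im).PosDef ∧
      hatZ !![0, 1; (d : ℝ), 0] (hatZ !![0, 1; (d : ℝ), 0] Z) = Z := by
  have hdR : ((d : ℝ)) ≠ 0 := by exact_mod_cast hd.ne
  have hdR' : ((d : ℝ)) < 0 := by exact_mod_cast hd
  have hsym : Z 1 0 = Z 0 1 := by
    have := congrFun (congrFun hZ.1 0) 1
    simpa [Matrix.transpose_apply] using this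
  obtain ⟨hherm, hpos⟩ := hZ
  have heq := hat_eq (d : ℝ) hdR Z
  -- positivity facts from hpos
  have h11 : 0 < (Z 1 1).im := by
    have := (Matrix.posDef_iff_dotProduct_mulVec.mp hpos).2 (x := ![0, 1]) (by intro h; simpa using congrFun h 1)
    simpa [dotProduct, Matrix.mulVec, Fin.sum_univ_two] using this
  have hdet : 0 < (Z 0 0).im * (Z 1 1).im - (Z 0 1).im * (Z 0 1).im := by
    have := hpos.det_pos
    rw [Matrix.det_fin_two] at this
    simpa [hsym] using this
  have hdC : ((d : ℝ) : ℂ) ≠ 0 := by exact_mod_cast hdR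
  refine ⟨?_, ?_, ?_⟩
  · rw [heq]
    ext i j; fin_cases i <;> fin_cases j <;> simp [hsym]
  · have hIm : (Matrix.of fun i j => ((hatZ !![0, 1; (d : ℝ), 0] Z) i j).im)
        = !![-(Z 1 1).im / d, -(Z 0 1).im; -(Z 0 1).im, -(d : ℝ) * (Z 0 0).im] := by
      rw [heq]
      ext i j
      fin_cases i <;> fin_cases j <;>
        (try simp [hsym, div_eq_mul_inv, ← Complex.ofReal_inv, Complex.mul_im]) <;>
        field_simp <;> ring <;> simp
    rw [hIm]
    apply posdef_fin_two
    · have := div_pos_of_neg_of_neg (neg_lt_zero.mpr h11) hdR'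
      exact this
    · have : -(Z 1 1).im / ↑d * (-↑d * (Z 0 0).im) - -(Z 0 1).im * -(Z 0 1).im
          = (Z 0 0).im * (Z 1 1).im - (Z 0 1).im * (Z 0 1).im := by
        field_simp
      rw [this]; exact hdet
  · rw [heq, hat_eq (d : ℝ) hdR]
    nth_rewrite 5 [Matrix.eta_fin_two Z]
    ext i j
    have hdZC : ((d : ℤ) : ℂ) ≠ 0 := by exact_mod_cast hd.ne
    fin_cases i <;> fin_cases j <;>
      simp [Complex.conj_ofReal, map_div₀] <;>
      (try field_simp [hdZC]) <;> (try ring)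

theorem hat_involution_on_Siegel (d : ℤ) (hd : d < 0) (hsf : Squarefree d)
    (hmod : d % 4 ≠ 1) (Z : Matrix (Fin 2) (Fin 2) ℂ) (hZ : Z ∈ Siegel) :
    hatZ !![0, 1; (d : ℝ), 0] Z ∈ Siegel ∧
      hatZ !![0, 1; (d : ℝ), 0] (hatZ !![0, 1; (d : ℝ), 0] Z) = Z := by
  obtain ⟨h1, h2, h3⟩ := hat_involution_on_Siegel' d hd hsf hmod Z hZ
  exact ⟨⟨h1, h2⟩, h3⟩
end

section
/- Let d < 0 be square-free with d ≢ 1 mod 4 and β = [[0,1],[d,0]]. A symmetric matrix Z ∈ 𝔥₂ satisfies Ẑ = β·conj(Z)·(βᵀ)⁻¹ = Z if and only if Z has the form [[z, r],[r, d·conj(z)]] with r ∈ ℝ and z ∈ ℂ with Im(z) > 0. -/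
open Matrix

theorem hat_fixed_points (d : ℤ) (hd : d < 0) (hsf : Squarefree d)
    (hmod : d % 4 ≠ 1) (Z : Matrix (Fin 2) (Fin 2) ℂ) (hZ : Z ∈ Siegel) :
    hatZ !![0, 1; (d : ℝ), 0] Z = Z ↔
      ∃ (z : ℂ) (r : ℝ), 0 < z.im ∧
        Z = !![z, (r : ℂ); (r : ℂ), (d : ℂ) * (starRingEnd ℂ) z] := by
  obtain ⟨hsym, hpos⟩ := hZ
  have hd0 : (d : ℂ) ≠ 0 := by exact_mod_cast hd.ne
  have hmap : (!![0, 1; (d : ℝ), 0] : Matrix (Fin 2) (Fin 2) ℝ).map Complex.ofReal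
      = !![0, 1; (d : ℂ), 0] := by
    ext i j; fin_cases i <;> fin_cases j <;> simp
  have hinv : ((!![0, 1; (d : ℂ), 0])ᵀ)⁻¹ = !![0, 1; (d:ℂ)⁻¹, 0] := by
    apply Matrix.inv_eq_right_inv
    ext i j; fin_cases i <;> fin_cases j <;>
      simp [Matrix.mul_apply, Fin.sum_univ_two, Matrix.vecHead, Matrix.vecTail, hd0]
  have h10 : Z 1 0 = Z 0 1 := by
    conv_lhs => rw [← hsym]
    rfl
  have hhat : hatZ !![0, 1; (d : ℝ), 0] Z =
      !![(starRingEnd ℂ) (Z 1 1) * (d:ℂ)⁻¹, (starRingEnd ℂ) (Z 1 0);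
         (starRingEnd ℂ) (Z 0 1), (d:ℂ) * (starRingEnd ℂ) (Z 0 0)] := by
    rw [hatZ, hmap, hinv]
    ext i j; fin_cases i <;> fin_cases j <;>
      simp [Matrix.mul_apply, Matrix.vecMul, dotProduct, Fin.sum_univ_two, Matrix.vecHead, Matrix.vecTail] <;> field_simp <;> ring
  have him : 0 < (Z 0 0).im := by
    have h := hpos.dotProduct_mulVec_pos (x := Pi.single 0 1) (by
      intro h; simpa using congrFun h 0)
    simpa [dotProduct, Matrix.mulVec, Fin.sum_univ_two, Pi.single] using h
  constructor
  · intro h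
    rw [hhat] at h
    have e01 : (starRingEnd ℂ) (Z 1 0) = Z 0 1 := congrFun (congrFun h 0) 1
    have e11 : (d:ℂ) * (starRingEnd ℂ) (Z 0 0) = Z 1 1 := congrFun (congrFun h 1) 1
    refine ⟨Z 0 0, (Z 0 1).re, him, ?_⟩
    have hreal : ((Z 0 1).re : ℂ) = Z 0 1 := by
      rw [h10] at e01
      have := Complex.conj_eq_iff_re.mp e01
      exact this
    ext i j; fin_cases i <;> fin_cases j <;>
      simp [hreal, h10, ← e11]
  · rintro ⟨z, r, hz, rfl⟩
    rw [hhat]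
    ext i j; fin_cases i <;> fin_cases j <;>
      simp [Matrix.vecHead, Matrix.vecTail] <;> field_simp <;> ring
end

section
/- Let d < 0, d ≢ 1 mod 4, and let φ: SL(2,ℂ) → M₄(ℝ) be defined by φ of the matrix with entries a₁+b₁√d, a₂+b₂√d, a₃+b₃√d, a₄+b₄√d (where √d = i√|d|) equal to the 4×4 matrix [[a₁,b₁,b₂,a₂],[b₁d,a₁,a₂,b₂d],[b₃d,a₃,a₄,b₄d],[a₃,b₃,b₄,a₄]]. Then φ is an injective group homomorphism into Sp(4,ℝ). -/
open Matrix

/-- The standard symplectic form matrix `J`. -/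
noncomputable def Jmat : Matrix (Fin 2 ⊕ Fin 2) (Fin 2 ⊕ Fin 2) ℝ :=
  Matrix.fromBlocks 0 1 (-1) 0

/-- The real symplectic group `Sp(4, ℝ)`. -/
def Sp4 : Set (Matrix (Fin 2 ⊕ Fin 2) (Fin 2 ⊕ Fin 2) ℝ) :=
  {g | gᵀ * Jmat * g = Jmat}

/-- Writing the entry `h i j = a i j + b i j * √d` (with `√d = i√(-d)`),
the real and imaginary coefficients. -/
noncomputable def acoef (h : Matrix (Fin 2) (Fin 2) ℂ) (i j : Fin 2) : ℝ := (h i j).re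

noncomputable def bcoef (d : ℤ) (h : Matrix (Fin 2) (Fin 2) ℂ) (i j : Fin 2) : ℝ :=
  (h i j).im / Real.sqrt (-d)

/-- The embedding `φ : SL(2,ℂ) → Sp(4,ℝ)` on matrices. -/
noncomputable def phiMat (d : ℤ) (h : Matrix (Fin 2) (Fin 2) ℂ) :
    Matrix (Fin 2 ⊕ Fin 2) (Fin 2 ⊕ Fin 2) ℝ :=
  Matrix.fromBlocks
    !![acoef h 0 0, bcoef d h 0 0; (d : ℝ) * bcoef d h 0 0, acoef h 0 0]
    !![bcoef d h 0 1, acoef h 0 1; acoef h 0 1, (d : ℝ) * bcoef d h 0 1]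
    !![(d : ℝ) * bcoef d h 1 0, acoef h 1 0; acoef h 1 0, bcoef d h 1 0]
    !![acoef h 1 1, (d : ℝ) * bcoef d h 1 1; bcoef d h 1 1, acoef h 1 1]

noncomputable def phi (d : ℤ) (h : Matrix.SpecialLinearGroup (Fin 2) ℂ) :
    Matrix (Fin 2 ⊕ Fin 2) (Fin 2 ⊕ Fin 2) ℝ :=
  phiMat d h.1

set_option maxHeartbeats 4000000 in
theorem phi_injective_hom_into_Sp4 (d : ℤ) (hd : d < 0) (hsf : Squarefree d)
    (hmod : d % 4 ≠ 1) :
    Function.Injective (phi d) ∧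
    (∀ g h : Matrix.SpecialLinearGroup (Fin 2) ℂ, phi d (g * h) = phi d g * phi d h) ∧
    (∀ h : Matrix.SpecialLinearGroup (Fin 2) ℂ, phi d h ∈ Sp4) := by
  have hdr : (d:ℝ) < 0 := by exact_mod_cast hd
  have hs0 : (0:ℝ) < Real.sqrt (-d) := Real.sqrt_pos.2 (by linarith)
  have hss : Real.sqrt (-(d:ℝ)) * Real.sqrt (-(d:ℝ)) = -d := Real.mul_self_sqrt (by linarith)
  have hdd : (d:ℝ) = -(Real.sqrt (-(d:ℝ)) * Real.sqrt (-(d:ℝ))) := by rw [hss]; ring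
  have hne : Real.sqrt (-(d:ℝ)) ≠ 0 := ne_of_gt hs0
  refine ⟨?_, ?_, ?_⟩
  · -- injectivity
    intro g h e
    have e' : ∀ i j, phiMat d g.1 i j = phiMat d h.1 i j := fun i j =>
      congrFun (congrFun e i) j
    have e00a := e' (Sum.inl 0) (Sum.inl 0)
    have e00b := e' (Sum.inl 0) (Sum.inl 1)
    have e01b := e' (Sum.inl 0) (Sum.inr 0)
    have e01a := e' (Sum.inl 0) (Sum.inr 1)
    have e10a := e' (Sum.inr 1) (Sum.inl 0)
    have e10b := e' (Sum.inr 1) (Sum.inl 1)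
    have e11a := e' (Sum.inr 0) (Sum.inr 0)
    have e11b := e' (Sum.inr 1) (Sum.inr 0)
    simp only [phiMat, acoef, bcoef, Matrix.fromBlocks_apply₁₁, Matrix.fromBlocks_apply₁₂,
      Matrix.fromBlocks_apply₂₁, Matrix.fromBlocks_apply₂₂, Fin.isValue, Matrix.cons_val',
      Matrix.cons_val_zero, Matrix.cons_val_one, Matrix.head_cons, Matrix.head_fin_const,
      Matrix.empty_val', Matrix.cons_val_fin_one, Matrix.of_apply,
      div_left_inj' hne] at e00a e00b e01b e01a e10a e10b e11a e11b
    apply Subtype.ext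
    ext i j
    fin_cases i <;> fin_cases j
    · exact Complex.ext e00a e00b
    · exact Complex.ext e01a e01b
    · exact Complex.ext e10a e10b
    · exact Complex.ext e11a e11b
  · -- homomorphism
    intro g h
    show phiMat d (g.1 * h.1) = phiMat d g.1 * phiMat d h.1
    ext (i|i) (j|j) <;> fin_cases i <;> fin_cases j <;>
      simp only [phiMat, acoef, bcoef, Matrix.mul_apply, Fintype.sum_sum_type, Fin.sum_univ_two,
        Complex.add_re, Complex.add_im, Complex.mul_re, Complex.mul_im,
        Matrix.fromBlocks_apply₁₁, Matrix.fromBlocks_apply₁₂, Matrix.fromBlocks_apply₂₁,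
        Matrix.fromBlocks_apply₂₂, Fin.isValue, Matrix.cons_val', Matrix.cons_val_zero,
        Matrix.cons_val_one, Matrix.head_cons, Matrix.head_fin_const, Matrix.empty_val',
        Matrix.cons_val_fin_one, Matrix.of_apply, Fin.mk_zero, Fin.mk_one] <;>
      rw [hdd] <;> simp only [neg_neg, Real.sqrt_mul_self hs0.le] <;> field_simp <;> ring
  · -- lands in Sp4
    intro h
    have hdet : h.1 0 0 * h.1 1 1 - h.1 0 1 * h.1 1 0 = 1 := by
      have := h.2
      rwa [Matrix.det_fin_two] at this
    have hR : (h.1 0 0).re * (h.1 1 1).re - (h.1 0 0).im * (h.1 1 1).im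
        - ((h.1 0 1).re * (h.1 1 0).re - (h.1 0 1).im * (h.1 1 0).im) = 1 := by
      have := congrArg Complex.re hdet
      simpa [Complex.mul_re] using this
    have hI : (h.1 0 0).re * (h.1 1 1).im + (h.1 0 0).im * (h.1 1 1).re
        - ((h.1 0 1).re * (h.1 1 0).im + (h.1 0 1).im * (h.1 1 0).re) = 0 := by
      have := congrArg Complex.im hdet
      simpa [Complex.mul_im] using this
    show (phiMat d h.1)ᵀ * Jmat * phiMat d h.1 = Jmat
    set s : ℝ := Real.sqrt (-(d:ℝ)) with hsdef
    ext (i|i) (j|j) <;> fin_cases i <;> fin_cases j <;>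
      simp only [phiMat, Jmat, acoef, bcoef, Matrix.mul_apply, Fintype.sum_sum_type,
        Fin.sum_univ_two, Matrix.transpose_apply,
        Matrix.fromBlocks_apply₁₁, Matrix.fromBlocks_apply₁₂, Matrix.fromBlocks_apply₂₁,
        Matrix.fromBlocks_apply₂₂, Fin.isValue, Matrix.cons_val', Matrix.cons_val_zero,
        Matrix.cons_val_one, Matrix.head_cons, Matrix.head_fin_const, Matrix.empty_val',
        Matrix.cons_val_fin_one, Matrix.of_apply, Fin.mk_zero, Fin.mk_one,
        Matrix.zero_apply, Matrix.one_apply, Matrix.neg_apply] <;>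
      rw [hdd] <;>
      simp only [neg_neg, Real.sqrt_mul_self hs0.le, zero_ne_one, one_ne_zero, if_false, if_true,
        ite_true, ite_false, eq_self_iff_true, mul_one, mul_zero, add_zero, zero_add, sub_zero] <;>
      field_simp <;>
      first
        | ring1
        | linear_combination (s * s) * hR
        | linear_combination (-(s * s)) * hR
        | linear_combination (s * s) * hI
        | linear_combination (-(s * s)) * hI
        | linear_combination (s * s * (s * s)) * hI
        | linear_combination (-(s * s * (s * s))) * hI
        | linear_combination s * hR
        | linear_combination (-s) * hR
        | linear_combination s * hI
        | linear_combination (-s) * hI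
end

section
/- Let d < 0, d ≢ 1 mod 4, N_β = diag(β,βᵀ) with β = [[0,1],[d,0]], and φ: SL(2,ℂ) → Sp(4,ℝ) the standard embedding. Then the fixed point set of the involution g ↦ N_β g N_β⁻¹ on Sp(4,ℝ) equals the image φ(SL(2,ℂ)). -/
open Matrix

theorem fixed_points_of_involution_eq_image_phi (d : ℤ) (hd : d < 0)
    (hsf : Squarefree d) (hmod : d % 4 ≠ 1)
    (g : Matrix (Fin 2 ⊕ Fin 2) (Fin 2 ⊕ Fin 2) ℝ) (hg : g ∈ Sp4) :
    (Matrix.fromBlocks !![0, 1; (d : ℝ), 0] 0 0 (!![0, 1; (d : ℝ), 0])ᵀ) * g *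
        (Matrix.fromBlocks !![0, 1; (d : ℝ), 0] 0 0 (!![0, 1; (d : ℝ), 0])ᵀ)⁻¹ = g ↔
      ∃ h : Matrix.SpecialLinearGroup (Fin 2) ℂ, phi d h = g := by
  have hd0 : (d : ℝ) ≠ 0 := by
    exact_mod_cast (ne_of_lt hd)
  have hdpos : (0:ℝ) < -(d:ℝ) := by
    have : (d:ℝ) < 0 := by exact_mod_cast hd
    linarith
  set s : ℝ := Real.sqrt (-(d:ℝ)) with hs_def
  have hs0 : s ≠ 0 := ne_of_gt (Real.sqrt_pos.mpr hdpos)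
  have hss : s * s = -(d:ℝ) := Real.mul_self_sqrt (le_of_lt hdpos)
  set N : Matrix (Fin 2 ⊕ Fin 2) (Fin 2 ⊕ Fin 2) ℝ :=
    Matrix.fromBlocks !![0, 1; (d : ℝ), 0] 0 0 (!![0, 1; (d : ℝ), 0])ᵀ with hN
  have hT : (!![0, 1; (d : ℝ), 0])ᵀ = !![0, (d:ℝ); 1, 0] := by
    ext i j; fin_cases i <;> fin_cases j <;> rfl
  have hdetN : N.det ≠ 0 := by
    have : N.det = (d:ℝ) * (d:ℝ) := by
      rw [hN, Matrix.det_fromBlocks_zero₂₁, hT]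
      simp [Matrix.det_fin_two_of]
    rw [this]; exact mul_ne_zero hd0 hd0
  have hNunit : IsUnit N.det := isUnit_iff_ne_zero.mpr hdetN
  have hNN : N * N⁻¹ = 1 := Matrix.mul_nonsing_inv N hNunit
  have hNN' : N⁻¹ * N = 1 := Matrix.nonsing_inv_mul N hNunit
  constructor
  · intro hfix
    have hcomm : N * g = g * N := by
      have h2 : N * g * N⁻¹ * N = g * N := by rw [hfix]
      rwa [mul_assoc, hNN', mul_one] at h2
    have E := Matrix.ext_iff.mpr hcomm
    have c1 := E (Sum.inl 0) (Sum.inl 0)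
    have c2 := E (Sum.inl 0) (Sum.inl 1)
    have c3 := E (Sum.inl 0) (Sum.inr 0)
    have c4 := E (Sum.inl 0) (Sum.inr 1)
    have c5 := E (Sum.inr 1) (Sum.inl 1)
    have c6 := E (Sum.inr 1) (Sum.inl 0)
    have c7 := E (Sum.inr 1) (Sum.inr 1)
    have c8 := E (Sum.inr 1) (Sum.inr 0)
    simp only [hN, hT] at c1 c2 c3 c4 c5 c6 c7 c8
    simp [Matrix.mul_apply, Fintype.sum_sum_type, Fin.sum_univ_two] at c1 c2 c3 c4 c5 c6 c7 c8
    have ES := Matrix.ext_iff.mpr hg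
    have s1 := ES (Sum.inl 0) (Sum.inr 0)
    have s2 := ES (Sum.inl 1) (Sum.inr 0)
    simp [Jmat, Matrix.mul_apply, Fintype.sum_sum_type, Fin.sum_univ_two,
      Matrix.fromBlocks_apply₁₁, Matrix.fromBlocks_apply₁₂, Matrix.fromBlocks_apply₂₁,
      Matrix.fromBlocks_apply₂₂] at s1 s2
    set a1 := g (Sum.inl 0) (Sum.inl 0) with ha1
    set b1 := g (Sum.inl 0) (Sum.inl 1) with hb1
    set b2 := g (Sum.inl 0) (Sum.inr 0) with hb2
    set a2 := g (Sum.inl 0) (Sum.inr 1) with ha2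
    set a3 := g (Sum.inr 0) (Sum.inl 1) with ha3
    set b3 := g (Sum.inr 1) (Sum.inl 1) with hb3
    set a4 := g (Sum.inr 0) (Sum.inr 0) with ha4
    set b4 := g (Sum.inr 1) (Sum.inr 0) with hb4
    set h : Matrix (Fin 2) (Fin 2) ℂ :=
      !![(a1:ℂ) + (b1*s)*Complex.I, (a2:ℂ) + (b2*s)*Complex.I;
         (a3:ℂ) + (b3*s)*Complex.I, (a4:ℂ) + (b4*s)*Complex.I] with hh
    rw [c1, c3, c6] at s1
    rw [← c5] at s1
    rw [c2, c3] at s2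
    have hdet : h.det = 1 := by
      rw [hh, Matrix.det_fin_two_of]
      apply Complex.ext
      · simp [Complex.add_re, Complex.add_im, Complex.mul_re, Complex.mul_im]
        linear_combination s1 + (b2*b3 - b1*b4) * hss
      · simp [Complex.add_re, Complex.add_im, Complex.mul_re, Complex.mul_im]
        linear_combination s * s2
    refine ⟨⟨h, hdet⟩, ?_⟩
    have hA : ∀ i j, acoef h i j = !![a1, a2; a3, a4] i j := by
      intro i j; fin_cases i <;> fin_cases j <;> simp [acoef, hh]
    have hB : ∀ i j, bcoef d h i j = !![b1, b2; b3, b4] i j := by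
      intro i j; fin_cases i <;> fin_cases j <;>
        · simp [bcoef, hh]
          rw [show Real.sqrt (-(d:ℤ) : ℝ) = s by push_cast [hs_def]; ring_nf]
          field_simp
    show phiMat d h = g
    ext i j
    rcases i with i | i <;> rcases j with j | j <;> fin_cases i <;> fin_cases j <;>
      simp [phiMat, hA, hB] <;> linarith [c1, c2, c3, c4, c5, c6, c7, c8]
  · rintro ⟨h, rfl⟩
    have hcomm : N * phi d h = phi d h * N := by
      rw [hN, hT]
      show _ * phiMat d h.1 = phiMat d h.1 * _
      rw [phiMat]
      ext i j
      rcases i with i | i <;> rcases j with j | j <;> fin_cases i <;> fin_cases j <;>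
        simp [Matrix.mul_apply, Fintype.sum_sum_type, Fin.sum_univ_two] <;> ring
    calc N * phi d h * N⁻¹ = phi d h * N * N⁻¹ := by rw [hcomm]
      _ = phi d h * (N * N⁻¹) := by rw [mul_assoc]
      _ = phi d h := by rw [hNN, mul_one]
end

section
/- Let d < 0, d ≢ 1 mod 4, and let φ: SL(2,ℂ) → Sp(4,ℝ) be the standard embedding. For N ≥ 1, an element h ∈ SL(2,ℂ) satisfies φ(h) ∈ Γ(N) (the principal congruence subgroup of Sp(4,ℤ) of level N) if and only if h ∈ SL(2,𝒪_d) with h ≡ I mod N𝒪_d, where 𝒪_d = ℤ[√d]. -/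
open Matrix

lemma sqrtd_ne (d : ℤ) (hd : d < 0) : Real.sqrt (-d) ≠ 0 := by
  refine ne_of_gt (Real.sqrt_pos.2 ?_)
  exact neg_pos.2 (by exact_mod_cast hd)

lemma entry_decomp (d : ℤ) (hd : d < 0) (z : ℂ) (x y : ℤ)
    (hx : (x:ℝ) = z.re) (hy : (y:ℝ) = z.im / Real.sqrt (-d)) :
    z = (x:ℂ) + (y:ℂ) * (Complex.I * Real.sqrt (-d)) := by
  have hs := sqrtd_ne d hd
  apply Complex.ext
  · simp [← hx]
  · field_simp at hy
    simp [← hy]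

lemma entry_decomp' (d : ℤ) (hd : d < 0) (z : ℂ) (x y : ℤ)
    (hz : z = (x:ℂ) + (y:ℂ) * (Complex.I * Real.sqrt (-d))) :
    z.re = (x:ℝ) ∧ z.im / Real.sqrt (-d) = (y:ℝ) := by
  have hs := sqrtd_ne d hd
  subst hz
  constructor
  · simp
  · field_simp
    simp [mul_comm]

theorem phi_mem_congruence_iff (d : ℤ) (hd : d < 0) (hsf : Squarefree d)
    (hmod : d % 4 ≠ 1) (N : ℕ) (hN : 1 ≤ N)
    (h : Matrix.SpecialLinearGroup (Fin 2) ℂ) :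
    (∃ g : Matrix (Fin 2 ⊕ Fin 2) (Fin 2 ⊕ Fin 2) ℤ,
        g.map (Int.cast : ℤ → ℝ) = phi d h ∧
        ∀ i j, (N : ℤ) ∣ (g i j - (1 : Matrix (Fin 2 ⊕ Fin 2) (Fin 2 ⊕ Fin 2) ℤ) i j)) ↔
      (∀ i j : Fin 2, ∃ x y : ℤ,
        h.1 i j = (x : ℂ) + (y : ℂ) * (Complex.I * Real.sqrt (-d)) ∧
        (N : ℤ) ∣ y ∧
        (N : ℤ) ∣ (x - if i = j then 1 else 0)) := by
  constructor
  · rintro ⟨g, hg, hcong⟩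
    have key : ∀ p q, (g p q : ℝ) = phi d h p q := fun p q => by
      rw [← hg]; rfl
    intro i j
    fin_cases i <;> fin_cases j
    · refine ⟨g (Sum.inl 0) (Sum.inl 0), g (Sum.inl 0) (Sum.inl 1), ?_, ?_, ?_⟩
      · refine entry_decomp d hd _ _ _ ?_ ?_
        · simpa [phi, phiMat, acoef] using key (Sum.inl 0) (Sum.inl 0)
        · simpa [phi, phiMat, bcoef] using key (Sum.inl 0) (Sum.inl 1)
      · simpa [Matrix.one_apply] using hcong (Sum.inl 0) (Sum.inl 1)
      · simpa [Matrix.one_apply] using hcong (Sum.inl 0) (Sum.inl 0)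
    · refine ⟨g (Sum.inl 0) (Sum.inr 1), g (Sum.inl 0) (Sum.inr 0), ?_, ?_, ?_⟩
      · refine entry_decomp d hd _ _ _ ?_ ?_
        · simpa [phi, phiMat, acoef] using key (Sum.inl 0) (Sum.inr 1)
        · simpa [phi, phiMat, bcoef] using key (Sum.inl 0) (Sum.inr 0)
      · simpa [Matrix.one_apply] using hcong (Sum.inl 0) (Sum.inr 0)
      · simpa [Matrix.one_apply] using hcong (Sum.inl 0) (Sum.inr 1)
    · refine ⟨g (Sum.inr 0) (Sum.inl 1), g (Sum.inr 1) (Sum.inl 1), ?_, ?_, ?_⟩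
      · refine entry_decomp d hd _ _ _ ?_ ?_
        · simpa [phi, phiMat, acoef] using key (Sum.inr 0) (Sum.inl 1)
        · simpa [phi, phiMat, bcoef] using key (Sum.inr 1) (Sum.inl 1)
      · simpa [Matrix.one_apply] using hcong (Sum.inr 1) (Sum.inl 1)
      · simpa [Matrix.one_apply] using hcong (Sum.inr 0) (Sum.inl 1)
    · refine ⟨g (Sum.inr 0) (Sum.inr 0), g (Sum.inr 1) (Sum.inr 0), ?_, ?_, ?_⟩
      · refine entry_decomp d hd _ _ _ ?_ ?_
        · simpa [phi, phiMat, acoef] using key (Sum.inr 0) (Sum.inr 0)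
        · simpa [phi, phiMat, bcoef] using key (Sum.inr 1) (Sum.inr 0)
      · simpa [Matrix.one_apply] using hcong (Sum.inr 1) (Sum.inr 0)
      · simpa [Matrix.one_apply] using hcong (Sum.inr 0) (Sum.inr 0)
  · intro H
    choose x y hxy hy2 hx2 using H
    have ha : ∀ i j, acoef h.1 i j = (x i j : ℝ) :=
      fun i j => (entry_decomp' d hd _ _ _ (hxy i j)).1
    have hb : ∀ i j, bcoef d h.1 i j = (y i j : ℝ) :=
      fun i j => (entry_decomp' d hd _ _ _ (hxy i j)).2
    refine ⟨Matrix.fromBlocks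
      !![x 0 0, y 0 0; d * y 0 0, x 0 0]
      !![y 0 1, x 0 1; x 0 1, d * y 0 1]
      !![d * y 1 0, x 1 0; x 1 0, y 1 0]
      !![x 1 1, d * y 1 1; y 1 1, x 1 1], ?_, ?_⟩
    · ext p q
      rcases p with p | p <;> rcases q with q | q <;> fin_cases p <;> fin_cases q <;>
        simp [phi, phiMat, ha, hb] <;> push_cast <;> ring
    · intro p q
      rcases p with p | p <;> rcases q with q | q <;> fin_cases p <;> fin_cases q <;>
        simp [Matrix.one_apply] <;>
        first
          | simpa using hx2 0 0
          | simpa using hx2 1 1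
          | simpa using hx2 0 1
          | simpa using hx2 1 0
          | exact hy2 0 0
          | exact hy2 0 1
          | exact hy2 1 0
          | exact hy2 1 1
          | exact Dvd.dvd.mul_left (hy2 0 0) d
          | exact Dvd.dvd.mul_left (hy2 0 1) d
          | exact Dvd.dvd.mul_left (hy2 1 0) d
          | exact Dvd.dvd.mul_left (hy2 1 1) d
end

section
/- Define an involution on U(2) by c ↦ c• = u₀ · conj(c) · u₀⁻¹ where u₀ = [[0,1],[-1,0]]. Then c ∈ U(2) satisfies c·c• = I if and only if c is a scalar matrix e^{iθ}·I, and in that case c = w•·w⁻¹ for w = e^{-iθ/2}·I. Consequently the nonabelian cohomology H¹ of Gal(ℂ/ℝ) acting on U(2) via this involution is trivial: every c ∈ U(2) with c·c• = I is of the form w•·w⁻¹ for some w ∈ U(2). -/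
open Matrix

noncomputable def bullet (c : Matrix (Fin 2) (Fin 2) ℂ) : Matrix (Fin 2) (Fin 2) ℂ :=
  !![0, 1; -1, 0] * (c.map (starRingEnd ℂ)) * (!![0, 1; -1, 0] : Matrix (Fin 2) (Fin 2) ℂ)⁻¹

lemma u0_inv : (!![0, 1; -1, 0] : Matrix (Fin 2) (Fin 2) ℂ)⁻¹ = !![0, -1; 1, 0] := by
  apply Matrix.inv_eq_right_inv
  norm_num [Matrix.mul_fin_two, ← Matrix.one_fin_two]

lemma bullet_eq (c : Matrix (Fin 2) (Fin 2) ℂ) :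
    bullet c = !![starRingEnd ℂ (c 1 1), -(starRingEnd ℂ (c 1 0));
                  -(starRingEnd ℂ (c 0 1)), starRingEnd ℂ (c 0 0)] := by
  rw [bullet, u0_inv]
  ext i j
  fin_cases i <;> fin_cases j <;>
    simp [Matrix.mul_apply, Matrix.vecMul, dotProduct, Fin.sum_univ_two, Matrix.map_apply]

lemma bullet_smul_one (s : ℂ) :
    bullet (s • (1 : Matrix (Fin 2) (Fin 2) ℂ)) = (starRingEnd ℂ s) • 1 := by
  rw [bullet_eq]
  ext i j
  fin_cases i <;> fin_cases j <;> simp [Matrix.one_apply]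

lemma smul_one_mul_smul_one (s t : ℂ) :
    (s • (1 : Matrix (Fin 2) (Fin 2) ℂ)) * (t • 1) = (s * t) • 1 := by
  rw [smul_mul_smul_comm, one_mul]

lemma exp_smul_one_inv (z : ℂ) :
    (Complex.exp z • (1 : Matrix (Fin 2) (Fin 2) ℂ))⁻¹ = Complex.exp (-z) • 1 := by
  apply Matrix.inv_eq_right_inv
  rw [smul_one_mul_smul_one, ← Complex.exp_add, add_neg_cancel, Complex.exp_zero, one_smul]

lemma conj_half (θ : ℝ) :
    starRingEnd ℂ (Complex.exp (-(θ / 2) * Complex.I)) = Complex.exp ((θ / 2) * Complex.I) := by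
  rw [← Complex.exp_conj, _root_.map_mul, Complex.conj_I, map_neg, map_div₀, Complex.conj_ofReal,
    map_ofNat]
  ring_nf

lemma part2 (c : Matrix (Fin 2) (Fin 2) ℂ) (θ : ℝ)
    (h : c = Complex.exp (θ * Complex.I) • (1 : Matrix (Fin 2) (Fin 2) ℂ)) :
    c = bullet (Complex.exp (-(θ / 2) * Complex.I) • (1 : Matrix (Fin 2) (Fin 2) ℂ)) *
        (Complex.exp (-(θ / 2) * Complex.I) • (1 : Matrix (Fin 2) (Fin 2) ℂ))⁻¹ := by
  rw [h, bullet_smul_one, exp_smul_one_inv, conj_half, smul_one_mul_smul_one,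
    ← Complex.exp_add]
  congr 2
  ring

theorem H1_of_U2_trivial (c : Matrix (Fin 2) (Fin 2) ℂ)
    (hc : c ∈ Matrix.unitaryGroup (Fin 2) ℂ) :
    (c * bullet c = 1 ↔
      ∃ θ : ℝ, c = Complex.exp (θ * Complex.I) • (1 : Matrix (Fin 2) (Fin 2) ℂ)) ∧
    (∀ θ : ℝ, c = Complex.exp (θ * Complex.I) • (1 : Matrix (Fin 2) (Fin 2) ℂ) →
      c = bullet (Complex.exp (-(θ / 2) * Complex.I) • (1 : Matrix (Fin 2) (Fin 2) ℂ)) *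
        (Complex.exp (-(θ / 2) * Complex.I) • (1 : Matrix (Fin 2) (Fin 2) ℂ))⁻¹) ∧
    (c * bullet c = 1 →
      ∃ w : Matrix (Fin 2) (Fin 2) ℂ, w ∈ Matrix.unitaryGroup (Fin 2) ℂ ∧
        c = bullet w * w⁻¹) := by
  have hsc : star c * c = 1 := Matrix.mem_unitaryGroup_iff'.mp hc
  have hcs : c * star c = 1 := Matrix.mem_unitaryGroup_iff.mp hc
  have key : c * bullet c = 1 → ∃ θ : ℝ, c = Complex.exp (θ * Complex.I) • 1 := by
    intro h
    have hb : bullet c = star c := by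
      calc bullet c = (star c * c) * bullet c := by rw [hsc, one_mul]
        _ = star c * (c * bullet c) := by rw [mul_assoc]
        _ = star c := by rw [h, mul_one]
    rw [bullet_eq] at hb
    have h00 : c 1 1 = c 0 0 := by
      have := congrFun (congrFun hb 0) 0
      simpa [Matrix.star_apply, star] using (starRingEnd ℂ).injective (by simpa using this)
    have h10 : c 1 0 = 0 := by
      have h' := congrFun (congrFun hb 0) 1
      simp [Matrix.star_apply] at h'
      have hx : starRingEnd ℂ (c 1 0) = 0 := by linear_combination (-1/2 : ℂ) * h'
      simpa using hx
    have h01 : c 0 1 = 0 := by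
      have h' := congrFun (congrFun hb 1) 0
      simp [Matrix.star_apply] at h'
      have hx : starRingEnd ℂ (c 0 1) = 0 := by linear_combination (-1/2 : ℂ) * h'
      simpa using hx
    have habs : c 0 0 * starRingEnd ℂ (c 0 0) = 1 := by
      have h' := congrFun (congrFun hcs 0) 0
      simpa [Matrix.mul_apply, Fin.sum_univ_two, Matrix.star_apply, h01,
        Matrix.one_apply] using h'
    have habs1 : ‖c 0 0‖ = 1 := by
      have : Complex.normSq (c 0 0) = 1 := by
        have := habs
        rw [Complex.mul_conj] at this
        exact_mod_cast this
      rw [← Complex.sq_norm] at this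
      nlinarith [norm_nonneg (c 0 0)]
    refine ⟨Complex.arg (c 0 0), ?_⟩
    have ha : c 0 0 = Complex.exp (Complex.arg (c 0 0) * Complex.I) := by
      conv_lhs => rw [← Complex.norm_mul_exp_arg_mul_I (c 0 0)]
      rw [habs1]
      simp
    ext i j
    fin_cases i <;> fin_cases j <;>
      simp [Matrix.one_apply, h00, h10, h01, ← ha]
  refine ⟨⟨key, ?_⟩, part2 c, ?_⟩
  · rintro ⟨θ, rfl⟩
    rw [bullet_smul_one, smul_one_mul_smul_one, ← Complex.exp_conj, ← Complex.exp_add]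
    have : (θ : ℂ) * Complex.I + starRingEnd ℂ ((θ : ℂ) * Complex.I) = 0 := by
      rw [_root_.map_mul, Complex.conj_I, Complex.conj_ofReal]
      ring
    rw [this, Complex.exp_zero, one_smul]
  · intro h
    obtain ⟨θ, hθ⟩ := key h
    refine ⟨Complex.exp (-(θ / 2) * Complex.I) • 1, ?_, part2 c θ hθ⟩
    rw [Matrix.mem_unitaryGroup_iff]
    rw [star_smul, star_one, smul_one_mul_smul_one]
    have : star (Complex.exp (-(θ / 2) * Complex.I)) = Complex.exp ((θ / 2) * Complex.I) :=
      conj_half θ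
    rw [this, ← Complex.exp_add]
    have h0 : -(θ / 2 : ℂ) * Complex.I + (θ / 2 : ℂ) * Complex.I = 0 := by ring
    rw [h0, Complex.exp_zero, one_smul]
end

section
/- Let d < 0 be square-free, and let the involution on Sp(4,ℝ) be ĝ = N_β g N_β⁻¹ and on 𝔥₂ be Ẑ = β·conj(Z)·(βᵀ)⁻¹. For every γ ∈ Sp(4,ℝ) with γ·γ̂ = I, there exists g ∈ Sp(4,ℝ) such that γ = ĝ·g⁻¹. (I.e., H¹(Gal(ℂ/ℝ), Sp(4,ℝ)) with this action is trivial.) -/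
open Matrix

/-- The involution `ĝ = N_β g N_β⁻¹`. -/
noncomputable def hatG (β : Matrix (Fin 2) (Fin 2) ℝ)
    (g : Matrix (Fin 2 ⊕ Fin 2) (Fin 2 ⊕ Fin 2) ℝ) :
    Matrix (Fin 2 ⊕ Fin 2) (Fin 2 ⊕ Fin 2) ℝ :=
  (Matrix.fromBlocks β 0 0 βᵀ) * g * (Matrix.fromBlocks β 0 0 βᵀ)⁻¹

/-! ### Auxiliary material -/

noncomputable def Emat : Matrix (Fin 2) (Fin 2) ℝ := !![0,1;1,0]

noncomputable def Smat : Matrix (Fin 2 ⊕ Fin 2) (Fin 2 ⊕ Fin 2) ℝ :=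
  fromBlocks 0 Emat (-Emat) 0

noncomputable def Cmat (d : ℝ) : Matrix (Fin 2 ⊕ Fin 2) (Fin 2 ⊕ Fin 2) ℝ :=
  fromBlocks !![0,d;1,0] 0 0 !![0,d;1,0]

private lemma Jmat_skew : Jmatᵀ = -Jmat := by
  simp [Jmat, fromBlocks_transpose, Matrix.fromBlocks_neg]

private lemma Jmat_mul_Jmat : Jmat * Jmat = -1 := by
  simp [Jmat, fromBlocks_multiply]
  rw [← Matrix.fromBlocks_one, Matrix.fromBlocks_neg]
  simp

private lemma Smat_mul_Smat : Smat * Smat = -1 := by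
  have hE : Emat * Emat = 1 := by
    simp [Emat]
    norm_num [Matrix.mul_fin_two, ← Matrix.one_fin_two]
  simp [Smat, fromBlocks_multiply, hE]
  rw [← Matrix.fromBlocks_one, Matrix.fromBlocks_neg]
  simp

private lemma skew_pair {A : Matrix (Fin 2 ⊕ Fin 2) (Fin 2 ⊕ Fin 2) ℝ} (hA : Aᵀ = -A)
    (x y : Fin 2 ⊕ Fin 2 → ℝ) : x ⬝ᵥ A *ᵥ y = -(y ⬝ᵥ A *ᵥ x) := by
  rw [dotProduct_mulVec, ← mulVec_transpose, hA, neg_mulVec, neg_dotProduct, dotProduct_comm]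

private lemma skew_self {A : Matrix (Fin 2 ⊕ Fin 2) (Fin 2 ⊕ Fin 2) ℝ} (hA : Aᵀ = -A)
    (x : Fin 2 ⊕ Fin 2 → ℝ) : x ⬝ᵥ A *ᵥ x = 0 := by
  have := skew_pair hA x x; linarith

private lemma mulVec_dot (A : Matrix (Fin 2 ⊕ Fin 2) (Fin 2 ⊕ Fin 2) ℝ)
    (x y : Fin 2 ⊕ Fin 2 → ℝ) : (A *ᵥ x) ⬝ᵥ y = x ⬝ᵥ (Aᵀ *ᵥ y) := by
  rw [dotProduct_comm, dotProduct_mulVec, ← mulVec_transpose, dotProduct_comm]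

private lemma det_unit_of_PJP {P : Matrix (Fin 2 ⊕ Fin 2) (Fin 2 ⊕ Fin 2) ℝ}
    (h : Pᵀ * Jmat * P = Smat) : IsUnit P.det := by
  have hS : Smat.det * Smat.det = 1 := by
    have := congrArg Matrix.det Smat_mul_Smat
    simpa [Matrix.det_mul, Matrix.det_neg] using
      this.trans (by simp [Matrix.det_neg]; norm_num)
  have hd := congrArg Matrix.det h
  rw [Matrix.det_mul, Matrix.det_mul, Matrix.det_transpose] at hd
  rw [isUnit_iff_ne_zero]
  intro h0
  rw [h0] at hd
  simp at hd
  rw [← hd] at hS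
  simp at hS

private lemma KJ_comm (d : ℝ) (hd0 : d ≠ 0) (K : Matrix (Fin 2 ⊕ Fin 2) (Fin 2 ⊕ Fin 2) ℝ)
    (hK2 : K * K = d • 1) (hKJ : Kᵀ * Jmat * K = d • Jmat) : Kᵀ * Jmat = Jmat * K := by
  have hKud : K * (d⁻¹ • K) = 1 := by
    rw [Matrix.mul_smul, hK2, smul_smul, inv_mul_cancel₀ hd0, one_smul]
  calc Kᵀ * Jmat = Kᵀ * Jmat * (K * (d⁻¹ • K)) := by rw [hKud, mul_one]
    _ = (Kᵀ * Jmat * K) * (d⁻¹ • K) := by rw [← mul_assoc]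
    _ = (d • Jmat) * (d⁻¹ • K) := by rw [hKJ]
    _ = Jmat * K := by
        rw [smul_mul_assoc, Matrix.mul_smul, smul_smul, mul_inv_cancel₀ hd0, one_smul]

private lemma JK_skew {K : Matrix (Fin 2 ⊕ Fin 2) (Fin 2 ⊕ Fin 2) ℝ}
    (hKJ' : Kᵀ * Jmat = Jmat * K) : (Jmat * K)ᵀ = -(Jmat * K) := by
  rw [transpose_mul, Jmat_skew, mul_neg, hKJ']

private lemma build_P (d : ℝ) (K : Matrix (Fin 2 ⊕ Fin 2) (Fin 2 ⊕ Fin 2) ℝ)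
    (hK2 : K * K = d • 1) (hKJ : Kᵀ * Jmat * K = d • Jmat)
    (hKJ' : Kᵀ * Jmat = Jmat * K) (hJKs : (Jmat * K)ᵀ = -(Jmat * K))
    (e f : Fin 2 ⊕ Fin 2 → ℝ)
    (h1 : e ⬝ᵥ Jmat *ᵥ f = 0) (h2 : e ⬝ᵥ (Jmat * K) *ᵥ f = 1) :
    ∃ P : Matrix (Fin 2 ⊕ Fin 2) (Fin 2 ⊕ Fin 2) ℝ,
      Pᵀ * Jmat * P = Smat ∧ K * P = P * Cmat d := by
  classical
  set u : Fin 2 ⊕ Fin 2 → (Fin 2 ⊕ Fin 2 → ℝ) :=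
    Sum.elim ![e, K *ᵥ e] ![f, K *ᵥ f] with hu
  set P : Matrix (Fin 2 ⊕ Fin 2) (Fin 2 ⊕ Fin 2) ℝ := Matrix.of fun i j => u j i with hP
  have key : ∀ (A : Matrix (Fin 2 ⊕ Fin 2) (Fin 2 ⊕ Fin 2) ℝ) i j,
      (Pᵀ * A * P) i j = u i ⬝ᵥ A *ᵥ u j := by
    intro A i j
    simp only [mul_apply, transpose_apply, of_apply, dotProduct, mulVec, hP, Matrix.of_apply]
    simp only [Finset.sum_mul]
    rw [Finset.sum_comm]
    simp only [Finset.mul_sum]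
    refine Finset.sum_congr rfl fun l _ => Finset.sum_congr rfl fun k _ => by ring
  have F_ee : e ⬝ᵥ Jmat *ᵥ e = 0 := skew_self Jmat_skew e
  have F_ff : f ⬝ᵥ Jmat *ᵥ f = 0 := skew_self Jmat_skew f
  have F_eKe : e ⬝ᵥ Jmat *ᵥ (K *ᵥ e) = 0 := by
    rw [mulVec_mulVec]; exact skew_self hJKs e
  have F_fKf : f ⬝ᵥ Jmat *ᵥ (K *ᵥ f) = 0 := by
    rw [mulVec_mulVec]; exact skew_self hJKs f
  have F_Kee : (K *ᵥ e) ⬝ᵥ Jmat *ᵥ e = 0 := by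
    rw [skew_pair Jmat_skew, F_eKe, neg_zero]
  have F_Kff : (K *ᵥ f) ⬝ᵥ Jmat *ᵥ f = 0 := by
    rw [skew_pair Jmat_skew, F_fKf, neg_zero]
  have F_KeKe : (K *ᵥ e) ⬝ᵥ Jmat *ᵥ (K *ᵥ e) = 0 := skew_self Jmat_skew _
  have F_KfKf : (K *ᵥ f) ⬝ᵥ Jmat *ᵥ (K *ᵥ f) = 0 := skew_self Jmat_skew _
  have F_fe : f ⬝ᵥ Jmat *ᵥ e = 0 := by
    rw [skew_pair Jmat_skew, h1, neg_zero]
  have F_eKf : e ⬝ᵥ Jmat *ᵥ (K *ᵥ f) = 1 := by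
    rw [mulVec_mulVec]; exact h2
  have F_Kef : (K *ᵥ e) ⬝ᵥ Jmat *ᵥ f = 1 := by
    rw [mulVec_dot, mulVec_mulVec, hKJ']; exact h2
  have F_fKe : f ⬝ᵥ Jmat *ᵥ (K *ᵥ e) = -1 := by
    rw [skew_pair Jmat_skew, F_Kef]
  have F_Kfe : (K *ᵥ f) ⬝ᵥ Jmat *ᵥ e = -1 := by
    rw [skew_pair Jmat_skew, F_eKf]
  have F_KeKf : (K *ᵥ e) ⬝ᵥ Jmat *ᵥ (K *ᵥ f) = 0 := by
    rw [mulVec_dot, mulVec_mulVec, mulVec_mulVec, hKJ, smul_mulVec,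
      dotProduct_smul, h1, smul_zero]
  have F_KfKe : (K *ᵥ f) ⬝ᵥ Jmat *ᵥ (K *ᵥ e) = 0 := by
    rw [skew_pair Jmat_skew, F_KeKf, neg_zero]
  have G_eKe : e ⬝ᵥ (Jmat * K) *ᵥ e = 0 := by rw [← mulVec_mulVec]; exact F_eKe
  have G_KeKe : K *ᵥ e ⬝ᵥ (Jmat * K) *ᵥ e = 0 := by rw [← mulVec_mulVec]; exact F_KeKe
  have G_KeKf : K *ᵥ e ⬝ᵥ (Jmat * K) *ᵥ f = 0 := by rw [← mulVec_mulVec]; exact F_KeKf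
  have G_fKe : f ⬝ᵥ (Jmat * K) *ᵥ e = -1 := by rw [← mulVec_mulVec]; exact F_fKe
  have G_KfKe : K *ᵥ f ⬝ᵥ (Jmat * K) *ᵥ e = 0 := by rw [← mulVec_mulVec]; exact F_KfKe
  have G_fKf : f ⬝ᵥ (Jmat * K) *ᵥ f = 0 := by rw [← mulVec_mulVec]; exact F_fKf
  have G_KfKf : K *ᵥ f ⬝ᵥ (Jmat * K) *ᵥ f = 0 := by rw [← mulVec_mulVec]; exact F_KfKf
  refine ⟨P, ?_, ?_⟩
  · ext i j
    rw [key]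
    rcases i with i | i <;> rcases j with j | j <;> fin_cases i <;> fin_cases j <;>
      simp [hu, Smat, Emat, F_ee, F_eKe, F_Kee, F_KeKe, h1, F_eKf, F_Kef, F_KeKf,
        F_fe, F_fKe, F_Kfe, F_KfKe, F_ff, F_fKf, F_Kff, F_KfKf, h2,
        G_eKe, G_KeKe, G_KeKf, G_fKe, G_KfKe, G_fKf, G_KfKf]
  · have hKKe : K *ᵥ (K *ᵥ e) = d • e := by
      rw [mulVec_mulVec, hK2, smul_mulVec, one_mulVec]
    have hKKf : K *ᵥ (K *ᵥ f) = d • f := by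
      rw [mulVec_mulVec, hK2, smul_mulVec, one_mulVec]
    have keyL : ∀ i j, (K * P) i j = (K *ᵥ u j) i := by
      intro i j
      simp [mul_apply, mulVec, dotProduct, hP]
    ext i j
    rw [keyL]
    rcases j with j | j <;> fin_cases j <;>
      simp [mul_apply, hP, hu, Cmat, Fintype.sum_sum_type, Fin.sum_univ_two, hKKe, hKKf,
        Pi.smul_apply, smul_eq_mul, mul_comm]

private lemma exists_ef (d : ℝ) (hd : d < 0) (K : Matrix (Fin 2 ⊕ Fin 2) (Fin 2 ⊕ Fin 2) ℝ)
    (hK2 : K * K = d • 1) :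
    ∃ e f : Fin 2 ⊕ Fin 2 → ℝ, e ⬝ᵥ Jmat *ᵥ f = 0 ∧ e ⬝ᵥ (Jmat * K) *ᵥ f = 1 := by
  classical
  have hJinv : Jmat * (-Jmat) = 1 := by rw [mul_neg, Jmat_mul_Jmat, neg_neg]
  set e : Fin 2 ⊕ Fin 2 → ℝ := Pi.single (Sum.inl 0) 1 with he_def
  have he : e ≠ 0 := by
    intro h
    have := congrFun h (Sum.inl 0)
    simp [he_def] at this
  set a : Fin 2 ⊕ Fin 2 → ℝ := e ᵥ* Jmat with ha_def
  set b : Fin 2 ⊕ Fin 2 → ℝ := e ᵥ* (Jmat * K) with hb_def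
  have ha : a ≠ 0 := by
    intro h
    apply he
    have h2 : e ᵥ* (Jmat * (-Jmat)) = 0 ᵥ* (-Jmat) := by
      rw [← vecMul_vecMul, ← ha_def, h]
    rw [hJinv, vecMul_one, zero_vecMul] at h2
    exact h2
  obtain ⟨i, hai⟩ : ∃ i, a i ≠ 0 := by
    by_contra hc
    push_neg at hc
    exact ha (funext fun i => hc i)
  set lam := b i / a i with hlam
  by_cases hall : ∀ j, b j = lam * a j
  · exfalso
    set M : Matrix (Fin 2 ⊕ Fin 2) (Fin 2 ⊕ Fin 2) ℝ := Jmat * K - lam • Jmat with hM_def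
    have hM0 : e ᵥ* M = 0 := by
      funext k
      have hbk := hall k
      rw [hb_def, ha_def] at hbk
      simp only [Matrix.vecMul, dotProduct] at hbk
      simp only [hM_def, Matrix.vecMul, dotProduct, Matrix.sub_apply,
        Matrix.smul_apply, smul_eq_mul, Pi.zero_apply]
      simp [mul_sub, Finset.sum_sub_distrib, hbk, Finset.mul_sum, mul_left_comm]
      ring
    have hdl : d - lam ^ 2 ≠ 0 := by nlinarith [sq_nonneg lam]
    have h3 : Jmat * K * K = d • Jmat := by
      rw [mul_assoc, hK2, Matrix.mul_smul, mul_one]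
    have expand : M * (K + lam • 1) = (d - lam ^ 2) • Jmat := by
      simp only [hM_def, sub_mul, mul_add, smul_mul_assoc, Matrix.mul_smul, mul_one, h3,
        smul_smul]
      rw [sub_smul, sq]
      abel
    have hMinv : M * ((d - lam ^ 2)⁻¹ • ((K + lam • 1) * (-Jmat))) = 1 := by
      rw [Matrix.mul_smul, ← mul_assoc, expand, smul_mul_assoc, smul_smul,
        inv_mul_cancel₀ hdl, one_smul, hJinv]
    apply he
    have h2 : e ᵥ* (M * ((d - lam ^ 2)⁻¹ • ((K + lam • 1) * (-Jmat)))) = 0 := by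
      rw [← vecMul_vecMul, hM0, zero_vecMul]
    rwa [hMinv, vecMul_one] at h2
  · push_neg at hall
    obtain ⟨j, hbj⟩ := hall
    have hbi : b i = lam * a i := by
      rw [hlam, div_mul_cancel₀ _ hai]
    set f0 : Fin 2 ⊕ Fin 2 → ℝ :=
      a i • (Pi.single j (1:ℝ) : Fin 2 ⊕ Fin 2 → ℝ)
        - a j • (Pi.single i (1:ℝ) : Fin 2 ⊕ Fin 2 → ℝ) with hf0
    have haf0 : a ⬝ᵥ f0 = 0 := by
      simp [hf0, dotProduct_sub, dotProduct_smul, dotProduct_single]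
      ring
    have hbf0 : b ⬝ᵥ f0 = a i * (b j - lam * a j) := by
      simp [hf0, dotProduct_sub, dotProduct_smul, dotProduct_single]
      rw [hbi]; ring
    have hbf0' : b ⬝ᵥ f0 ≠ 0 := by
      rw [hbf0]
      exact mul_ne_zero hai (sub_ne_zero.mpr hbj)
    refine ⟨e, (b ⬝ᵥ f0)⁻¹ • f0, ?_, ?_⟩
    · rw [dotProduct_mulVec, ← ha_def, dotProduct_smul, haf0]
      simp
    · rw [dotProduct_mulVec, ← hb_def, dotProduct_smul, smul_eq_mul,
        inv_mul_cancel₀ hbf0']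

theorem H1_of_Sp4_trivial (d : ℝ) (hd : d < 0) (hsq : ∃ d' : ℤ, (d' : ℝ) = d ∧ Squarefree d')
    (β : Matrix (Fin 2) (Fin 2) ℝ) (hβ : β * β = d • 1)
    (γ : Matrix (Fin 2 ⊕ Fin 2) (Fin 2 ⊕ Fin 2) ℝ) (hγ : γ ∈ Sp4)
    (hcoc : γ * hatG β γ = 1) :
    ∃ g ∈ Sp4, γ = hatG β g * g⁻¹ := by
  classical
  simp only [hatG] at hcoc ⊢
  simp only [Sp4, Set.mem_setOf_eq] at hγ ⊢
  set N : Matrix (Fin 2 ⊕ Fin 2) (Fin 2 ⊕ Fin 2) ℝ := Matrix.fromBlocks β 0 0 βᵀ with hN_def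
  have hd0 : d ≠ 0 := ne_of_lt hd
  have hβT : βᵀ * βᵀ = d • 1 := by
    have := congrArg Matrix.transpose hβ
    rwa [transpose_mul, transpose_smul, transpose_one] at this
  have hNN : N * N = d • 1 := by
    rw [hN_def]
    simp [fromBlocks_multiply, hβ, hβT]
    rw [← Matrix.fromBlocks_one, Matrix.fromBlocks_smul]
    simp
  have hNJ : Nᵀ * Jmat * N = d • Jmat := by
    rw [hN_def, Jmat]
    simp [fromBlocks_transpose, fromBlocks_multiply, hβ, hβT, Matrix.fromBlocks_smul]
  have hNinv : N⁻¹ = d⁻¹ • N := by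
    apply Matrix.inv_eq_right_inv
    rw [Matrix.mul_smul, hNN, smul_smul, inv_mul_cancel₀ hd0, one_smul]
  have hγNγ : γ * N * γ = N := by
    have h1 : γ * N * γ * N = d • 1 := by
      have h0 : γ * (N * γ * (d⁻¹ • N)) = 1 := by rw [← hNinv]; exact hcoc
      have h0'' : γ * (N * γ * (d⁻¹ • N)) = d⁻¹ • (γ * N * γ * N) := by
        rw [Matrix.mul_smul, Matrix.mul_smul]
        simp only [mul_assoc]
      rw [h0''] at h0
      have h0''' := congrArg (fun X => d • X) h0
      simpa [smul_smul, mul_inv_cancel₀ hd0] using h0'''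
    calc γ * N * γ = (γ * N * γ) * (N * (d⁻¹ • N)) := by
          rw [Matrix.mul_smul, hNN, smul_smul, inv_mul_cancel₀ hd0, one_smul, mul_one]
      _ = (γ * N * γ * N) * (d⁻¹ • N) := by rw [← mul_assoc]
      _ = (d • (1 : Matrix (Fin 2 ⊕ Fin 2) (Fin 2 ⊕ Fin 2) ℝ)) * (d⁻¹ • N) := by rw [h1]
      _ = N := by
          rw [smul_mul_assoc, one_mul, smul_smul, mul_inv_cancel₀ hd0, one_smul]
  set K1 := N * γ with hK1_def
  have hK12 : K1 * K1 = d • 1 := by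
    rw [hK1_def]
    calc N * γ * (N * γ) = N * (γ * N * γ) := by simp only [mul_assoc]
      _ = N * N := by rw [hγNγ]
      _ = d • 1 := hNN
  have hK1J : K1ᵀ * Jmat * K1 = d • Jmat := by
    rw [hK1_def, transpose_mul]
    calc γᵀ * Nᵀ * Jmat * (N * γ) = γᵀ * (Nᵀ * Jmat * N) * γ := by simp only [mul_assoc]
      _ = γᵀ * (d • Jmat) * γ := by rw [hNJ]
      _ = d • (γᵀ * Jmat * γ) := by
          rw [Matrix.mul_smul, smul_mul_assoc]
      _ = d • Jmat := by rw [hγ]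
  have hNKJ' := KJ_comm d hd0 N hNN hNJ
  have hK1KJ' := KJ_comm d hd0 K1 hK12 hK1J
  obtain ⟨e0, f0, he01, he02⟩ := exists_ef d hd N hNN
  obtain ⟨P0, hP0S, hP0C⟩ := build_P d N hNN hNJ hNKJ' (JK_skew hNKJ') e0 f0 he01 he02
  obtain ⟨e1, f1, he11, he12⟩ := exists_ef d hd K1 hK12
  obtain ⟨P1, hP1S, hP1C⟩ := build_P d K1 hK12 hK1J hK1KJ' (JK_skew hK1KJ') e1 f1 he11 he12
  have hP0d : IsUnit P0.det := det_unit_of_PJP hP0S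
  have hP1d : IsUnit P1.det := det_unit_of_PJP hP1S
  set g := P1 * P0⁻¹ with hg
  have hgdet : IsUnit g.det := by
    rw [hg, Matrix.det_mul]
    exact hP1d.mul ((Matrix.isUnit_nonsing_inv_det P0 hP0d))
  have hP0Td : IsUnit (P0ᵀ).det := by rwa [Matrix.det_transpose]
  have hgSp : gᵀ * Jmat * g = Jmat := by
    rw [hg, transpose_mul, Matrix.transpose_nonsing_inv]
    have e1 : (P0ᵀ)⁻¹ * P1ᵀ * Jmat * (P1 * P0⁻¹)
        = (P0ᵀ)⁻¹ * ((P1ᵀ * Jmat * P1) * P0⁻¹) := by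
      simp only [mul_assoc]
    rw [e1, hP1S, ← hP0S]
    calc (P0ᵀ)⁻¹ * (P0ᵀ * Jmat * P0 * P0⁻¹)
        = ((P0ᵀ)⁻¹ * P0ᵀ) * (Jmat * (P0 * P0⁻¹)) := by simp only [mul_assoc]
      _ = Jmat := by
          rw [Matrix.nonsing_inv_mul _ hP0Td, Matrix.mul_nonsing_inv _ hP0d, one_mul, mul_one]
  have hP0Ninv : P0⁻¹ * N = Cmat d * P0⁻¹ := by
    calc P0⁻¹ * N = P0⁻¹ * N * (P0 * P0⁻¹) := by
          rw [Matrix.mul_nonsing_inv _ hP0d, mul_one]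
      _ = P0⁻¹ * (N * P0) * P0⁻¹ := by simp only [mul_assoc]
      _ = P0⁻¹ * (P0 * Cmat d) * P0⁻¹ := by rw [hP0C]
      _ = (P0⁻¹ * P0) * (Cmat d * P0⁻¹) := by simp only [mul_assoc]
      _ = Cmat d * P0⁻¹ := by rw [Matrix.nonsing_inv_mul _ hP0d, one_mul]
  have hgN : g * N = N * γ * g := by
    calc g * N = P1 * (P0⁻¹ * N) := by rw [hg, mul_assoc]
      _ = P1 * (Cmat d * P0⁻¹) := by rw [hP0Ninv]
      _ = (P1 * Cmat d) * P0⁻¹ := by rw [mul_assoc]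
      _ = (K1 * P1) * P0⁻¹ := by rw [hP1C]
      _ = N * γ * g := by rw [hg, hK1_def]; simp only [mul_assoc]
  refine ⟨g, hgSp, ?_⟩
  have h5' : g * N * g⁻¹ = N * γ := by
    calc g * N * g⁻¹ = (N * γ * g) * g⁻¹ := by rw [hgN]
      _ = N * γ * (g * g⁻¹) := by rw [mul_assoc]
      _ = N * γ := by rw [Matrix.mul_nonsing_inv _ hgdet, mul_one]
  have h5 : N * γ = g * N * g⁻¹ := h5'.symm
  calc γ = (d⁻¹ • N) * (N * γ) := by
        rw [smul_mul_assoc, ← mul_assoc, hNN, smul_mul_assoc, one_mul, smul_smul,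
          inv_mul_cancel₀ hd0, one_smul]
    _ = (d⁻¹ • N) * (g * N * g⁻¹) := by rw [h5]
    _ = N * g * N⁻¹ * g⁻¹ := by
        rw [hNinv]
        simp only [smul_mul_assoc, Matrix.mul_smul, mul_assoc]
end
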